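/- The smooth functions A², B² of single variables x and y respectively satisfy -(B²)'(y)(x-y) - 2B²(y) = (A²)'(x)(x-y) - 2A²(x) for all x ≠ y if and only if there exists a single quadratic polynomial R(z) = r₀ + r₁z + r₂z² such that A²(x) = R(x) and B²(y) = R(y). -/

import Mathlib

/-- Smooth functions `f = A²`, `g = B²` of one variable satisfy
`-(B²)'(y)(x-y) - 2B²(y) = (A²)'(x)(x-y) - 2A²(x)` for all `x ≠ y` iff there is a
single quadratic polynomial `R(z) = r₀ + r₁ z + r₂ z²` with `A² = R` and `B² = R`. -/
theorem functional_equation_iff_common_quadratic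
    (f g : ℝ → ℝ) (hf : ContDiff ℝ (⊤ : ℕ∞) f) (hg : ContDiff ℝ (⊤ : ℕ∞) g) :
    (∀ x y : ℝ, x ≠ y →
        -(deriv g y) * (x - y) - 2 * g y = deriv f x * (x - y) - 2 * f x) ↔
    (∃ r₀ r₁ r₂ : ℝ, (∀ x, f x = r₀ + r₁ * x + r₂ * x ^ 2) ∧
        (∀ y, g y = r₀ + r₁ * y + r₂ * y ^ 2)) := by
  have hfd : Differentiable ℝ f := hf.differentiable (by simp)
  have hgd : Differentiable ℝ g := hg.differentiable (by simp)
  have hf' : ContDiff ℝ (⊤ : ℕ∞) (deriv f) := (contDiff_infty_iff_deriv.mp (hf.of_le (by simp))).2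
  have hf'd : Differentiable ℝ (deriv f) := hf'.differentiable (by simp)
  have hf'c : Continuous (deriv f) := hf'.continuous
  constructor
  · intro h
    -- extend to all x, y by continuity
    have hall : ∀ x y : ℝ,
        -(deriv g y) * (x - y) - 2 * g y = deriv f x * (x - y) - 2 * f x := by
      intro x y
      have hc1 : Continuous fun x : ℝ => -(deriv g y) * (x - y) - 2 * g y := by
        fun_prop
      have hc2 : Continuous fun x : ℝ => deriv f x * (x - y) - 2 * f x := by
        fun_prop
      have := Continuous.ext_on (dense_compl_singleton y) hc1 hc2
        (fun x hx => h x y hx)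
      exact congrFun this x
    -- f = g
    have hfg : ∀ y, g y = f y := by
      intro y
      have := hall y y
      simp at this
      linarith
    -- key identity: (f'(x)+f'(y))(x-y) = 2 (f x - f y)
    have key : ∀ x y : ℝ,
        (deriv f x + deriv f y) * (x - y) = 2 * (f x - f y) := by
      intro x y
      have := hall x y
      rw [hfg y] at this
      have hdy : deriv g y = deriv f y := by
        have : g = f := funext hfg
        rw [this]
      rw [hdy] at this
      ring_nf at this ⊢
      linarith
    -- differentiate in x: f''(x)(x-y) = f'(x) - f'(y)
    have key2 : ∀ x y : ℝ,
        deriv (deriv f) x * (x - y) = deriv f x - deriv f y := by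
      intro x y
      have hF : (fun x => (deriv f x + deriv f y) * (x - y) - 2 * (f x - f y))
          = fun _ => (0 : ℝ) := by
        funext x; rw [key x y]; ring
      have hd : HasDerivAt
          (fun x => (deriv f x + deriv f y) * (x - y) - 2 * (f x - f y))
          (deriv (deriv f) x * (x - y) + (deriv f x + deriv f y) * 1
            - 2 * deriv f x) x := by
        exact ((((hf'd x).hasDerivAt.add_const (deriv f y)).mul
          ((hasDerivAt_id x).sub_const y)).sub
          ((((hfd x).hasDerivAt.sub_const (f y))).const_mul 2)).congr_deriv (by simp)
      have h0 : deriv (fun x => (deriv f x + deriv f y) * (x - y) - 2 * (f x - f y)) x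
          = 0 := by rw [hF]; simp
      have := hd.deriv
      rw [h0] at this
      linarith
    -- f'' is constant
    have hcc : ∀ x : ℝ, deriv (deriv f) x = deriv (deriv f) 0 := by
      have same : ∀ x y : ℝ, x ≠ y → deriv (deriv f) x = deriv (deriv f) y := by
        intro x y hxy
        have h1 := key2 x y
        have h2 := key2 y x
        have hsub : x - y ≠ 0 := sub_ne_zero.mpr hxy
        have : deriv (deriv f) x * (x - y) = deriv (deriv f) y * (x - y) := by
          rw [h1]; nlinarith [h2]
        exact mul_right_cancel₀ hsub this
      intro x
      by_cases hx : x = 0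
      · rw [hx]
      · exact same x 0 hx
    set c := deriv (deriv f) 0 with hc
    -- f'(x) = c x + f'(0)
    have hf'eq : ∀ x : ℝ, deriv f x = c * x + deriv f 0 := by
      intro x
      have := key2 x 0
      rw [hcc x] at this
      simp at this
      linarith
    -- f is the quadratic
    refine ⟨f 0, deriv f 0, c / 2, ?_, ?_⟩
    · have hq : ∀ x, f x = f 0 + deriv f 0 * x + c / 2 * x ^ 2 := by
        have hdiff : Differentiable ℝ
            (fun x => f x - (f 0 + deriv f 0 * x + c / 2 * x ^ 2)) := by
          fun_prop
        have hz : ∀ x, deriv (fun x => f x - (f 0 + deriv f 0 * x + c / 2 * x ^ 2)) x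
            = 0 := by
          intro x
          have hd : HasDerivAt (fun x => f x - (f 0 + deriv f 0 * x + c / 2 * x ^ 2))
              (deriv f x - (0 + deriv f 0 * 1 + c / 2 * (2 * x ^ 1))) x := by
            have h1 : HasDerivAt (fun x : ℝ => f 0 + deriv f 0 * x + c / 2 * x ^ 2)
                (0 + deriv f 0 * 1 + c / 2 * (2 * x ^ 1)) x := by
              exact ((hasDerivAt_const x (f 0)).add
                ((hasDerivAt_id x).const_mul (deriv f 0))).add
                ((hasDerivAt_pow 2 x).const_mul (c / 2))
            exact (hfd x).hasDerivAt.sub h1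
          rw [hd.deriv, hf'eq x]; ring
        have hconst := is_const_of_deriv_eq_zero hdiff hz
        intro x
        have := hconst x 0
        simp at this
        linarith
      exact hq
    · intro y
      rw [hfg y]
      have hq : ∀ x, f x = f 0 + deriv f 0 * x + c / 2 * x ^ 2 := by
        have hdiff : Differentiable ℝ
            (fun x => f x - (f 0 + deriv f 0 * x + c / 2 * x ^ 2)) := by
          fun_prop
        have hz : ∀ x, deriv (fun x => f x - (f 0 + deriv f 0 * x + c / 2 * x ^ 2)) x
            = 0 := by
          intro x
          have hd : HasDerivAt (fun x => f x - (f 0 + deriv f 0 * x + c / 2 * x ^ 2))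
              (deriv f x - (0 + deriv f 0 * 1 + c / 2 * (2 * x ^ 1))) x := by
            have h1 : HasDerivAt (fun x : ℝ => f 0 + deriv f 0 * x + c / 2 * x ^ 2)
                (0 + deriv f 0 * 1 + c / 2 * (2 * x ^ 1)) x := by
              exact ((hasDerivAt_const x (f 0)).add
                ((hasDerivAt_id x).const_mul (deriv f 0))).add
                ((hasDerivAt_pow 2 x).const_mul (c / 2))
            exact (hfd x).hasDerivAt.sub h1
          rw [hd.deriv, hf'eq x]; ring
        have hconst := is_const_of_deriv_eq_zero hdiff hz
        intro x
        have := hconst x 0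
        simp at this
        linarith
      exact hq y
  · rintro ⟨r₀, r₁, r₂, hfq, hgq⟩
    intro x y _
    have hdf : deriv f x = r₁ + 2 * r₂ * x := by
      have : f = fun x => r₀ + r₁ * x + r₂ * x ^ 2 := funext hfq
      rw [this]
      have hd : HasDerivAt (fun x : ℝ => r₀ + r₁ * x + r₂ * x ^ 2)
          (0 + r₁ * 1 + r₂ * (2 * x ^ 1)) x :=
        ((hasDerivAt_const x r₀).add ((hasDerivAt_id x).const_mul r₁)).add
          ((hasDerivAt_pow 2 x).const_mul r₂)
      rw [hd.deriv]; ring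
    have hdg : deriv g y = r₁ + 2 * r₂ * y := by
      have : g = fun x => r₀ + r₁ * x + r₂ * x ^ 2 := funext hgq
      rw [this]
      have hd : HasDerivAt (fun x : ℝ => r₀ + r₁ * x + r₂ * x ^ 2)
          (0 + r₁ * 1 + r₂ * (2 * y ^ 1)) y :=
        ((hasDerivAt_const y r₀).add ((hasDerivAt_id y).const_mul r₁)).add
          ((hasDerivAt_pow 2 y).const_mul r₂)
      rw [hd.deriv]; ring
    rw [hdf, hdg, hfq x, hgq y]; ring
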